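/- arXiv:1103.4048 — 4 statements merged into one kernel-verified Lean document; each statement's English description precedes it below -/
import Mathlib

section
/- The polynomial F(w¹,w²,w³) = w¹(w¹w²/8 + (w³)²/4) + (w²)⁵/3840 + (w²)²(w³)²/32 satisfies the WDVV associativity equations on ℝ³ with constant metric η given by η₁₂ = η₂₁ = 1/4, η₃₃ = 1/2 and all other entries zero: for all α,β one has ∂₁∂_α∂_β F = η_{αβ}, the matrix η is invertible, and the structure constants c^γ_{αβ} = Σ_ε (η⁻¹)^{γε} ∂_ε∂_α∂_β F satisfy Σ_ε c^ε_{αβ} c^σ_{εγ} = Σ_ε c^ε_{αγ} c^σ_{εβ} for all α,β,γ,σ at every point of ℝ³. -/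
/-- Partial derivative of `f : (Fin N → ℝ) → ℝ` in the `i`-th coordinate direction. -/
noncomputable def pd {N : ℕ} (i : Fin N) (f : (Fin N → ℝ) → ℝ) : (Fin N → ℝ) → ℝ :=
  fun x => fderiv ℝ f x (Pi.single i 1)

/-- The potential. -/
noncomputable def FF : (Fin 3 → ℝ) → ℝ :=
  fun w => w 0 * (w 0 * w 1 / 8 + (w 2) ^ 2 / 4) + (w 1) ^ 5 / 3840 + (w 1) ^ 2 * (w 2) ^ 2 / 32

/-- The constant metric. -/
noncomputable def eta : Matrix (Fin 3) (Fin 3) ℝ :=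
  !![0, 1/4, 0; 1/4, 0, 0; 0, 0, 1/2]

/-- Third partial derivatives `c_(αβγ) = ∂_α ∂_β ∂_γ F`. -/
noncomputable def c3 (α β γ : Fin 3) (x : Fin 3 → ℝ) : ℝ :=
  pd α (pd β (pd γ FF)) x

/-- Structure constants `c^γ_(αβ) = Σ_ε (η⁻¹)^(γε) c_(εαβ)`. -/
noncomputable def cUp (γ α β : Fin 3) (x : Fin 3 → ℝ) : ℝ :=
  ∑ ε, eta⁻¹ γ ε * c3 ε α β x

/-! All functions involved are polynomials in the coordinates, so their partial derivatives are
computed mechanically by the sum, product and power rules for `pd`. Since `w¹` enters `F` only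
through the cubic term `w¹ (w¹ w² / 8 + (w³)² / 4)`, the derivatives `∂₁∂_α∂_β F` are the constants
`η_αβ`. Raising an index with `η⁻¹` gives a commutative algebra with unit `e₁` whose products depend
polynomially on the point, and associativity is a polynomial identity checked entry by entry. -/

section PartialDerivative

variable {N : ℕ} (i : Fin N) {f g : (Fin N → ℝ) → ℝ}

lemma pd_coord (j : Fin N) : pd i (fun x => x j) = fun _ => if i = j then 1 else 0 := by
  funext x
  simp [pd, (hasFDerivAt_apply j x).fderiv, Pi.single_apply, eq_comm]

lemma pd_add (hf : Differentiable ℝ f) (hg : Differentiable ℝ g) :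
    pd i (fun x => f x + g x) = fun x => pd i f x + pd i g x := by
  funext x
  simp [pd, fderiv_fun_add (hf x) (hg x)]

lemma pd_mul (hf : Differentiable ℝ f) (hg : Differentiable ℝ g) :
    pd i (fun x => f x * g x) = fun x => pd i f x * g x + f x * pd i g x := by
  funext x
  simp [pd, fderiv_fun_mul (hf x) (hg x)]
  ring

lemma pd_pow (hf : Differentiable ℝ f) (n : ℕ) :
    pd i (fun x => f x ^ n) = fun x => n * f x ^ (n - 1) * pd i f x := by
  funext x
  simp [pd, fderiv_fun_pow n (hf x)]

lemma pd_div_const (hf : Differentiable ℝ f) (c : ℝ) :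
    pd i (fun x => f x / c) = fun x => pd i f x / c := by
  funext x
  simp [pd, div_eq_mul_inv, fderiv_mul_const (hf x), mul_comm]

end PartialDerivative

noncomputable def gradFF (x : Fin 3 → ℝ) : Fin 3 → ℝ :=
  ![x 0 * x 1 / 4 + x 2 ^ 2 / 4, x 0 ^ 2 / 8 + x 1 ^ 4 / 768 + x 1 * x 2 ^ 2 / 16,
    x 0 * x 2 / 2 + x 1 ^ 2 * x 2 / 16]

noncomputable def hessFF (x : Fin 3 → ℝ) : Fin 3 → Fin 3 → ℝ :=
  ![![x 1 / 4, x 0 / 4, x 2 / 2],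
    ![x 0 / 4, x 1 ^ 3 / 192 + x 2 ^ 2 / 16, x 1 * x 2 / 8],
    ![x 2 / 2, x 1 * x 2 / 8, x 0 / 2 + x 1 ^ 2 / 16]]

noncomputable def d3FF (x : Fin 3 → ℝ) : Fin 3 → Fin 3 → Fin 3 → ℝ :=
  ![![![0, 1/4, 0], ![1/4, 0, 0], ![0, 0, 1/2]],
    ![![1/4, 0, 0], ![0, x 1 ^ 2 / 64, x 2 / 8], ![0, x 2 / 8, x 1 / 8]],
    ![![0, 0, 1/2], ![0, x 2 / 8, x 1 / 8], ![1/2, x 1 / 8, 0]]]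

lemma pd_FF (i : Fin 3) : pd i FF = fun x => gradFF x i := by
  unfold FF
  fin_cases i <;>
    simp (disch := fun_prop) [gradFF, pd_add, pd_mul, pd_pow, pd_div_const, pd_coord] <;>
    funext x <;> ring

lemma pd_pd_FF (i j : Fin 3) : pd j (pd i FF) = fun x => hessFF x i j := by
  rw [pd_FF]
  fin_cases i <;> fin_cases j <;>
    simp (disch := fun_prop) [gradFF, hessFF, pd_add, pd_mul, pd_pow, pd_div_const, pd_coord] <;>
    funext x <;> ring

lemma c3_eq (α β γ : Fin 3) (x : Fin 3 → ℝ) : c3 α β γ x = d3FF x α β γ := by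
  rw [c3, pd_pd_FF]
  fin_cases α <;> fin_cases β <;> fin_cases γ <;>
    simp (disch := fun_prop) [hessFF, d3FF, pd_add, pd_mul, pd_pow, pd_div_const, pd_coord] <;>
    ring

lemma c3_zero_left (α β : Fin 3) (x : Fin 3 → ℝ) : c3 0 α β x = eta α β := by
  rw [c3_eq]
  fin_cases α <;> fin_cases β <;> simp [d3FF, eta]

lemma eta_det : eta.det = -1 / 32 := by
  simp [eta, Matrix.det_fin_three]
  norm_num

lemma eta_inv : eta⁻¹ = !![0, 4, 0; 4, 0, 0; 0, 0, 2] := by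
  refine Matrix.inv_eq_right_inv ?_
  ext i j
  fin_cases i <;> fin_cases j <;> simp [eta, Matrix.mul_apply, Fin.sum_univ_three]

noncomputable def structConst (x : Fin 3 → ℝ) : Fin 3 → Fin 3 → Fin 3 → ℝ :=
  ![![![1, 0, 0], ![0, x 1 ^ 2 / 16, x 2 / 2], ![0, x 2 / 2, x 1 / 2]],
    ![![0, 1, 0], ![1, 0, 0], ![0, 0, 2]],
    ![![0, 0, 1], ![0, x 2 / 4, x 1 / 4], ![1, x 1 / 4, 0]]]

lemma cUp_eq (γ α β : Fin 3) (x : Fin 3 → ℝ) : cUp γ α β x = structConst x γ α β := by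
  simp only [cUp, eta_inv, c3_eq, Fin.sum_univ_three]
  fin_cases γ <;> fin_cases α <;> fin_cases β <;> simp [d3FF, structConst] <;> ring

lemma structConst_assoc (x : Fin 3 → ℝ) (α β γ σ : Fin 3) :
    ∑ ε, structConst x ε α β * structConst x σ ε γ =
      ∑ ε, structConst x ε α γ * structConst x σ ε β := by
  simp only [Fin.sum_univ_three]
  fin_cases α <;> fin_cases β <;> fin_cases γ <;> fin_cases σ <;> simp [structConst] <;> ring

theorem stmt_1 :
    (∀ (α β : Fin 3) (x : Fin 3 → ℝ), c3 0 α β x = eta α β) ∧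
    IsUnit eta.det ∧
    (∀ (α β γ σ : Fin 3) (x : Fin 3 → ℝ), 
      ∑ ε, cUp ε α β x * cUp σ ε γ x = ∑ ε, cUp ε α γ x * cUp σ ε β x) := by
  refine ⟨c3_zero_left, ?_, fun α β γ σ x => ?_⟩
  · rw [eta_det]; norm_num
  · simpa only [cUp_eq] using structConst_assoc x α β γ σ
end

section
/- Let p₁, p₂, p₃, a₁, a₂, a₃ ∈ ℂ with p₁², p₂², p₃² pairwise distinct, and let * be any ℂ-bilinear product on ℂ³ whose values on distinct standard basis vectors are e_i * e_j = (a_j/(p_j² − p_i²))·e_i + (a_i/(p_i² − p_j²))·e_j for all i ≠ j. Then (e₁ * e₂) * e₃ = e₁ * (e₂ * e₃). -/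
/-!
Write `e i * e j = f i j • e i + f j i • e j`. Expanding both sides of
`(e i * e j) * e l = e i * (e j * e l)` in `e i, e j, e l`, the `e j`-coefficients agree
trivially, and the other two agree exactly when `f` satisfies the three-term identity
`f i j * f i l = f i j * f j l + f i l * f l j` (for `(i, j, l)` and `(l, j, i)`).
For `f i j = a j / (q j - q i)` this is the partial-fraction identity
`1 / ((q j - q i) (q l - q i)) = 1 / ((q j - q i) (q l - q j)) - 1 / ((q l - q i) (q l - q j))`.
-/

section PairProduct

variable {ι R M : Type*} [CommRing R] [AddCommGroup M] [Module R M]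

theorem assoc_of_mul_eq_pair (mul : M →ₗ[R] M →ₗ[R] M) (e : ι → M) (f : ι → ι → R)
    (hmul : ∀ i j, i ≠ j → mul (e i) (e j) = f i j • e i + f j i • e j)
    (hf : ∀ i j l, i ≠ j → i ≠ l → j ≠ l → f i j * f i l = f i j * f j l + f i l * f l j)
    {i j l : ι} (hij : i ≠ j) (hil : i ≠ l) (hjl : j ≠ l) :
    mul (mul (e i) (e j)) (e l) = mul (e i) (mul (e j) (e l)) := by
  simp only [hmul _ _ hij, hmul _ _ hil, hmul _ _ hjl,
    map_add, map_smul, LinearMap.add_apply, LinearMap.smul_apply]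
  linear_combination (norm := module)
    hf i j l hij hil hjl • e i - hf l j i hjl.symm hil.symm hij.symm • e l

end PairProduct

theorem div_sub_mul_div_sub_eq {K : Type*} [Field K] {x y z : K} (b c : K)
    (hxy : x ≠ y) (hxz : x ≠ z) (hyz : y ≠ z) :
    b / (y - x) * (c / (z - x)) = b / (y - x) * (c / (z - y)) + c / (z - x) * (b / (y - z)) := by
  have : y - x ≠ 0 := sub_ne_zero.mpr hxy.symm
  have : z - x ≠ 0 := sub_ne_zero.mpr hxz.symm
  have : z - y ≠ 0 := sub_ne_zero.mpr hyz.symm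
  have : y - z ≠ 0 := sub_ne_zero.mpr hyz
  field_simp
  ring

theorem stmt_12_general (p a : Fin 3 → ℂ)
    (hp : ∀ i j : Fin 3, i ≠ j → p i ^ 2 ≠ p j ^ 2)
    (mul : (Fin 3 → ℂ) →ₗ[ℂ] (Fin 3 → ℂ) →ₗ[ℂ] (Fin 3 → ℂ))
    (e : Fin 3 → Fin 3 → ℂ)
    (hmul : ∀ i j : Fin 3, i ≠ j →
      mul (e i) (e j) =
        (a j / (p j ^ 2 - p i ^ 2)) • e i + (a i / (p i ^ 2 - p j ^ 2)) • e j) :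
    mul (mul (e 0) (e 1)) (e 2) = mul (e 0) (mul (e 1) (e 2)) :=
  assoc_of_mul_eq_pair mul e (fun i j => a j / (p j ^ 2 - p i ^ 2)) hmul
    (fun i j l hij hil hjl => div_sub_mul_div_sub_eq (a j) (a l) (hp i j hij) (hp i l hil)
      (hp j l hjl))
    (by decide) (by decide) (by decide)

theorem stmt_12 (p a : Fin 3 → ℂ)
    (hp : ∀ i j : Fin 3, i ≠ j → p i ^ 2 ≠ p j ^ 2)
    (mul : (Fin 3 → ℂ) →ₗ[ℂ] (Fin 3 → ℂ) →ₗ[ℂ] (Fin 3 → ℂ))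
    (e : Fin 3 → Fin 3 → ℂ) (he : ∀ i, e i = Pi.single i 1)
    (hmul : ∀ i j : Fin 3, i ≠ j →
      mul (e i) (e j) =
        (a j / (p j ^ 2 - p i ^ 2)) • e i + (a i / (p i ^ 2 - p j ^ 2)) • e j) :
    mul (mul (e 0) (e 1)) (e 2) = mul (e 0) (mul (e 1) (e 2)) :=
  stmt_12_general p a hp mul e hmul
end

section
/- Let k ≥ 1 and p₁,…,p_k, a₁,…,a_k ∈ ℂ with p₁²,…,p_k² pairwise distinct, and let * be any ℂ-bilinear product on ℂ^k whose values on distinct standard basis vectors are e_i * e_j = (a_j/(p_j² − p_i²))·e_i + (a_i/(p_i² − p_j²))·e_j for all i ≠ j. Then the left-nested product (…((e₁ * e₂) * e₃) … ) * e_k equals Σ_{i=1}^{k} ( Π_{j≠i} a_j/(p_j² − p_i²) )·e_i. -/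
/-!
Write `x i = p i ^ 2` and `c S i = ∏ j ∈ S \ {i}, a j / (x j - x i)`. Multiplying
`∑ i ∈ S, c S i • e i` on the right by `e m`, `m ∉ S`, multiplies each `c S i` by
`a m / (x m - x i)`, which gives `c (S ∪ {m}) i`, and produces `e m` with coefficient
`∑ i ∈ S, c S i * a i / (x i - x m)`. By the partial fraction expansion of
`1 / ∏ j ∈ S, (x j - y)` at `y = x m` (the barycentric Lagrange formula for the constant `1`)
this coefficient is `∏ j ∈ S, a j / (x j - x m) = c (S ∪ {m}) m`, so the formula propagates
along the nested product.
-/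
open Finset Polynomial

section PartialFractions

variable {K ι : Type*} [Field K] [DecidableEq ι] {s : Finset ι} {v : ι → K} {y : K}

theorem Lagrange.sum_prod_inv_sub_mul_inv_sub_eq_prod (hvs : Set.InjOn v s) (hs : s.Nonempty)
    (hy : ∀ i ∈ s, v i ≠ y) :
    ∑ i ∈ s, (∏ j ∈ s.erase i, (v j - v i)⁻¹) * (v i - y)⁻¹ = ∏ i ∈ s, (v i - y)⁻¹ := by
  -- barycentric form of the interpolant of `1`; the nodes `-v` and point `-y` fix the signs
  have h := Lagrange.eval_interpolate_not_at_node (s := s) (v := -v) (x := -y) 1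
    fun i hi => by simpa [neg_inj, eq_comm] using hy i hi
  have hneg : Set.InjOn (-v) s := neg_injective.comp_injOn hvs
  rw [Lagrange.interpolate_one hneg hs, eval_one, Lagrange.eval_nodal] at h
  simp only [Lagrange.nodalWeight, Pi.neg_apply, Pi.one_apply, mul_one, neg_sub_neg] at h
  rw [prod_inv_distrib]
  exact eq_inv_of_mul_eq_one_right h.symm

theorem Lagrange.sum_prod_div_sub_mul_div_sub_eq_prod (a : ι → K) (hvs : Set.InjOn v s)
    (hs : s.Nonempty) (hy : ∀ i ∈ s, v i ≠ y) :
    ∑ i ∈ s, (∏ j ∈ s.erase i, a j / (v j - v i)) * (a i / (v i - y)) =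
      ∏ i ∈ s, a i / (v i - y) := by
  simp only [div_eq_mul_inv, prod_mul_distrib]
  calc _ = ∑ i ∈ s, (∏ j ∈ s, a j) * ((∏ j ∈ s.erase i, (v j - v i)⁻¹) * (v i - y)⁻¹) :=
        sum_congr rfl fun i hi => by rw [← mul_prod_erase s a hi]; ring
    _ = _ := by rw [← mul_sum, sum_prod_inv_sub_mul_inv_sub_eq_prod hvs hs hy]

end PartialFractions

section NestedProduct

variable {K ι M : Type*} [Field K] [DecidableEq ι] [AddCommGroup M] [Module K M]
  {mul : M →ₗ[K] M →ₗ[K] M} {e : ι → M} {a v : ι → K}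

theorem mul_sum_prod_div_sub_smul
    (hmul : ∀ i j, i ≠ j → mul (e i) (e j) = (a j / (v j - v i)) • e i + (a i / (v i - v j)) • e j)
    {s : Finset ι} {m : ι} (hvs : Set.InjOn v (insert m s : Finset ι)) (hs : s.Nonempty)
    (hm : m ∉ s) :
    mul (∑ i ∈ s, (∏ j ∈ s.erase i, a j / (v j - v i)) • e i) (e m) =
      ∑ i ∈ insert m s, (∏ j ∈ (insert m s).erase i, a j / (v j - v i)) • e i := by
  have hmi : ∀ i ∈ s, i ≠ m := fun i hi => ne_of_mem_of_not_mem hi hm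
  have hvm : ∀ i ∈ s, v i ≠ v m := fun i hi =>
    hvs.ne (mem_coe.2 (mem_insert_of_mem hi)) (mem_coe.2 (mem_insert_self m s)) (hmi i hi)
  simp only [map_sum, LinearMap.sum_apply, map_smul, LinearMap.smul_apply]
  rw [sum_congr rfl fun i hi => by rw [hmul i m (hmi i hi)]]
  simp only [smul_add, smul_smul, sum_add_distrib, ← sum_smul]
  rw [Lagrange.sum_prod_div_sub_mul_div_sub_eq_prod a (hvs.mono (subset_insert m s)) hs hvm,
    sum_insert hm, erase_insert hm, add_comm]
  refine congrArg₂ _ rfl (sum_congr rfl fun i hi => ?_)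
  rw [erase_insert_of_ne (hmi i hi).symm, prod_insert fun h => hm (mem_of_mem_erase h), mul_comm]

theorem foldl_mul_eq_sum_prod_div_sub_smul
    (hmul : ∀ i j, i ≠ j → mul (e i) (e j) = (a j / (v j - v i)) • e i + (a i / (v i - v j)) • e j)
    (hv : Function.Injective v) (i₀ : ι) (L : List ι) (hL : (i₀ :: L).Nodup) :
    L.foldl (fun w i => mul w (e i)) (e i₀) =
      ∑ i ∈ (i₀ :: L).toFinset, (∏ j ∈ (i₀ :: L).toFinset.erase i, a j / (v j - v i)) • e i := by
  induction L using List.reverseRecOn with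
  | nil => simp
  | append_singleton L m ih =>
    rw [← List.cons_append, ← List.concat_eq_append, List.nodup_concat] at hL
    have hinsert : (i₀ :: (L ++ [m])).toFinset = insert m (i₀ :: L).toFinset := by
      ext; simp [or_left_comm]
    rw [List.foldl_concat, ih hL.2, hinsert,
      mul_sum_prod_div_sub_smul hmul hv.injOn ⟨i₀, by simp⟩ (by simpa using hL.1)]

end NestedProduct

theorem stmt_13_general (k : ℕ) (hk : 1 ≤ k) (p a : Fin k → ℂ)
    (hp : ∀ i j : Fin k, i ≠ j → p i ^ 2 ≠ p j ^ 2)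
    (mul : (Fin k → ℂ) →ₗ[ℂ] (Fin k → ℂ) →ₗ[ℂ] (Fin k → ℂ))
    (e : Fin k → Fin k → ℂ)
    (hmul : ∀ i j : Fin k, i ≠ j →
      mul (e i) (e j) =
        (a j / (p j ^ 2 - p i ^ 2)) • e i + (a i / (p i ^ 2 - p j ^ 2)) • e j) :
    ((List.finRange k).tail).foldl (fun x i => mul x (e i)) (e ⟨0, hk⟩) =
      ∑ i : Fin k, (∏ j ∈ Finset.univ.erase i, a j / (p j ^ 2 - p i ^ 2)) • e i := by
  have hinj : Function.Injective fun i => p i ^ 2 := fun i j h => by_contra fun hij => hp i j hij h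
  have hcons : ⟨0, hk⟩ :: (List.finRange k).tail = List.finRange k := by
    have hne : List.finRange k ≠ [] := by simp only [ne_eq, List.finRange_eq_nil_iff]; omega
    conv_rhs => rw [← List.cons_head_tail hne]
    simp [List.head_eq_getElem]
  rw [foldl_mul_eq_sum_prod_div_sub_smul hmul hinj _ _ (hcons ▸ List.nodup_finRange k), hcons,
    List.toFinset_finRange]

theorem stmt_13 (k : ℕ) (hk : 1 ≤ k) (p a : Fin k → ℂ)
    (hp : ∀ i j : Fin k, i ≠ j → p i ^ 2 ≠ p j ^ 2)
    (mul : (Fin k → ℂ) →ₗ[ℂ] (Fin k → ℂ) →ₗ[ℂ] (Fin k → ℂ))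
    (e : Fin k → Fin k → ℂ) (he : ∀ i, e i = Pi.single i 1)
    (hmul : ∀ i j : Fin k, i ≠ j →
      mul (e i) (e j) =
        (a j / (p j ^ 2 - p i ^ 2)) • e i + (a i / (p i ^ 2 - p j ^ 2)) • e j) :
    ((List.finRange k).tail).foldl (fun x i => mul x (e i)) (e ⟨0, hk⟩) =
      ∑ i : Fin k, (∏ j ∈ Finset.univ.erase i, a j / (p j ^ 2 - p i ^ 2)) • e i :=
  stmt_13_general k hk p a hp mul e hmul
end

section
/- Let p₁, p₂, p₃, a₁, a₂, a₃ ∈ ℂ with p₁², p₂², p₃² pairwise distinct. Let * be any ℂ-bilinear product on ℂ³ with e_i * e_j = (a_j/(p_j² − p_i²))·e_i + (a_i/(p_i² − p_j²))·e_j for all i ≠ j, and let B be any ℂ-bilinear form on ℂ³ with B(e_i, e_j) = a_j/(p_j² − p_i²) + a_i/(p_i² − p_j²) for all i ≠ j. Then B(e₁ * e₂, e₃) = B(e₁, e₂ * e₃), and both equal a₂a₃/((p₂² − p₁²)(p₃² − p₁²)) + a₁a₃/((p₁² − p₂²)(p₃² − p₂²)) + a₁a₂/((p₁² − p₃²)(p₂²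 − p₃²)). -/
/-!
Write `c i j = a j / (q j - q i)`, so that `e i * e j = c i j • e i + c j i • e j` and
`B (e i) (e j) = c i j + c j i`. By bilinearity both `B (e i * e j) (e k)` and
`B (e i) (e j * e k)` are quadratic in the `c`'s, and clearing the denominators
`q i - q j` shows that each equals the same expression, symmetric in `i, j, k`.
-/

section

variable {K ι : Type*} [Field K] (q a : ι → K)

def pairCoeff (i j : ι) : K := a j / (q j - q i)

def tripleCoeff (i j k : ι) : K :=
  a j * a k / ((q j - q i) * (q k - q i)) + a i * a k / ((q i - q j) * (q k - q j)) +
    a i * a j / ((q i - q k) * (q j - q k))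

variable {q} {i j k : ι}

theorem pairCoeff_mul_add_left (hij : q i ≠ q j) (hik : q i ≠ q k) (hjk : q j ≠ q k) :
    pairCoeff q a i j * (pairCoeff q a i k + pairCoeff q a k i) +
      pairCoeff q a j i * (pairCoeff q a j k + pairCoeff q a k j) = tripleCoeff q a i j k := by
  have := sub_ne_zero.mpr hij; have := sub_ne_zero.mpr hik; have := sub_ne_zero.mpr hjk
  unfold pairCoeff tripleCoeff
  field_simp
  ring

theorem pairCoeff_mul_add_right (hij : q i ≠ q j) (hik : q i ≠ q k) (hjk : q j ≠ q k) :
    pairCoeff q a j k * (pairCoeff q a i j + pairCoeff q a j i) +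
      pairCoeff q a k j * (pairCoeff q a i k + pairCoeff q a k i) = tripleCoeff q a i j k := by
  have := sub_ne_zero.mpr hij; have := sub_ne_zero.mpr hik; have := sub_ne_zero.mpr hjk
  unfold pairCoeff tripleCoeff
  field_simp
  ring

variable {M : Type*} [AddCommGroup M] [Module K M]
  {mul : M →ₗ[K] M →ₗ[K] M} {B : M →ₗ[K] M →ₗ[K] K} {e : ι → M}

theorem apply_mul_apply_eq_tripleCoeff
    (hmul : ∀ i j, i ≠ j → mul (e i) (e j) = pairCoeff q a i j • e i + pairCoeff q a j i • e j)
    (hB : ∀ i j, i ≠ j → B (e i) (e j) = pairCoeff q a i j + pairCoeff q a j i)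
    (hij : q i ≠ q j) (hik : q i ≠ q k) (hjk : q j ≠ q k) :
    B (mul (e i) (e j)) (e k) = tripleCoeff q a i j k := by
  rw [hmul i j (ne_of_apply_ne q hij), map_add, map_smul, map_smul, LinearMap.add_apply,
    LinearMap.smul_apply, LinearMap.smul_apply, hB i k (ne_of_apply_ne q hik),
    hB j k (ne_of_apply_ne q hjk), smul_eq_mul, smul_eq_mul,
    pairCoeff_mul_add_left a hij hik hjk]

theorem apply_apply_mul_eq_tripleCoeff
    (hmul : ∀ i j, i ≠ j → mul (e i) (e j) = pairCoeff q a i j • e i + pairCoeff q a j i • e j)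
    (hB : ∀ i j, i ≠ j → B (e i) (e j) = pairCoeff q a i j + pairCoeff q a j i)
    (hij : q i ≠ q j) (hik : q i ≠ q k) (hjk : q j ≠ q k) :
    B (e i) (mul (e j) (e k)) = tripleCoeff q a i j k := by
  rw [hmul j k (ne_of_apply_ne q hjk), map_add, map_smul, map_smul, hB i j (ne_of_apply_ne q hij),
    hB i k (ne_of_apply_ne q hik), smul_eq_mul, smul_eq_mul,
    pairCoeff_mul_add_right a hij hik hjk]

end

theorem stmt_14_general (p a : Fin 3 → ℂ)
    (hp : ∀ i j : Fin 3, i ≠ j → p i ^ 2 ≠ p j ^ 2)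
    (mul : (Fin 3 → ℂ) →ₗ[ℂ] (Fin 3 → ℂ) →ₗ[ℂ] (Fin 3 → ℂ))
    (B : (Fin 3 → ℂ) →ₗ[ℂ] (Fin 3 → ℂ) →ₗ[ℂ] ℂ)
    (e : Fin 3 → Fin 3 → ℂ)
    (hmul : ∀ i j : Fin 3, i ≠ j →
      mul (e i) (e j) =
        (a j / (p j ^ 2 - p i ^ 2)) • e i + (a i / (p i ^ 2 - p j ^ 2)) • e j)
    (hB : ∀ i j : Fin 3, i ≠ j →
      B (e i) (e j) = a j / (p j ^ 2 - p i ^ 2) + a i / (p i ^ 2 - p j ^ 2)) :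
    B (mul (e 0) (e 1)) (e 2) = B (e 0) (mul (e 1) (e 2)) ∧
    B (mul (e 0) (e 1)) (e 2) =
      a 1 * a 2 / ((p 1 ^ 2 - p 0 ^ 2) * (p 2 ^ 2 - p 0 ^ 2)) +
      a 0 * a 2 / ((p 0 ^ 2 - p 1 ^ 2) * (p 2 ^ 2 - p 1 ^ 2)) +
      a 0 * a 1 / ((p 0 ^ 2 - p 2 ^ 2) * (p 1 ^ 2 - p 2 ^ 2)) := by
  have h01 : p 0 ^ 2 ≠ p 1 ^ 2 := hp 0 1 (by decide)
  have h02 : p 0 ^ 2 ≠ p 2 ^ 2 := hp 0 2 (by decide)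
  have h12 : p 1 ^ 2 ≠ p 2 ^ 2 := hp 1 2 (by decide)
  have hleft := apply_mul_apply_eq_tripleCoeff (q := fun i => p i ^ 2) a hmul hB h01 h02 h12
  have hright := apply_apply_mul_eq_tripleCoeff (q := fun i => p i ^ 2) a hmul hB h01 h02 h12
  exact ⟨hleft.trans hright.symm, hleft⟩

theorem stmt_14 (p a : Fin 3 → ℂ)
    (hp : ∀ i j : Fin 3, i ≠ j → p i ^ 2 ≠ p j ^ 2)
    (mul : (Fin 3 → ℂ) →ₗ[ℂ] (Fin 3 → ℂ) →ₗ[ℂ] (Fin 3 → ℂ))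
    (B : (Fin 3 → ℂ) →ₗ[ℂ] (Fin 3 → ℂ) →ₗ[ℂ] ℂ)
    (e : Fin 3 → Fin 3 → ℂ) (he : ∀ i, e i = Pi.single i 1)
    (hmul : ∀ i j : Fin 3, i ≠ j →
      mul (e i) (e j) =
        (a j / (p j ^ 2 - p i ^ 2)) • e i + (a i / (p i ^ 2 - p j ^ 2)) • e j)
    (hB : ∀ i j : Fin 3, i ≠ j →
      B (e i) (e j) = a j / (p j ^ 2 - p i ^ 2) + a i / (p i ^ 2 - p j ^ 2)) :
    B (mul (e 0) (e 1)) (e 2) = B (e 0) (mul (e 1) (e 2)) ∧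
    B (mul (e 0) (e 1)) (e 2) =
      a 1 * a 2 / ((p 1 ^ 2 - p 0 ^ 2) * (p 2 ^ 2 - p 0 ^ 2)) +
      a 0 * a 2 / ((p 0 ^ 2 - p 1 ^ 2) * (p 2 ^ 2 - p 1 ^ 2)) +
      a 0 * a 1 / ((p 0 ^ 2 - p 2 ^ 2) * (p 1 ^ 2 - p 2 ^ 2)) :=
  stmt_14_general p a hp mul B e hmul hB
end
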